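/- Let k be an odd natural number, c_0, …, c_k real numbers with c_0 > 0, and g(α) = Σ_{j=0}^{k} c_j (cos α)^{k−j} (sin α)^j. Assume g(α + 2π/k) = g(α) and g(2π − α) = g(α) for all real α. Then g(2πj/k) = g(0) > 0 and g(π/k + 2πj/k) = −g(0) < 0 for all j = 0, 1, …, (k−1)/2, and consequently for every j ∈ {1, …, k} there exists θ_j with (j−1)π/k < θ_j < jπ/k and g(θ_j) = 0. -/

import Mathlib

/-!
Since `k` is odd, every monomial `cos^(k-j) sin^j` changes sign under `α ↦ α + π`, so `g` is
`π`-antiperiodic. Writing `π = k • (π / k)` with `k = 2t + 1` and subtracting `t` periods `2π / k`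
shows that `g` is already `π / k`-antiperiodic. Hence `g (n π / k) = (-1)^n g 0` with
`g 0 = c 0 > 0`, and the intermediate value theorem gives a zero of `g` in each interval
`((n - 1) π / k, n π / k)`.
-/

open Real Finset Function

noncomputable def trigForm (k : ℕ) (c : ℕ → ℝ) (α : ℝ) : ℝ :=
  ∑ j ∈ range (k + 1), c j * cos α ^ (k - j) * sin α ^ j

section trigForm

variable (k : ℕ) (c : ℕ → ℝ)

theorem trigForm_zero : trigForm k c 0 = c 0 := by
  rw [trigForm, sum_eq_single 0]
  · simp
  · intro j _ hj
    simp [zero_pow hj]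
  · simp

theorem continuous_trigForm : Continuous (trigForm k c) := by
  unfold trigForm
  fun_prop

theorem trigForm_add_pi (α : ℝ) : trigForm k c (α + π) = (-1) ^ k * trigForm k c α := by
  rw [trigForm, trigForm, mul_sum]
  refine sum_congr rfl fun j hj => ?_
  have hjk : k - j + j = k := Nat.sub_add_cancel (Nat.lt_succ_iff.mp (mem_range.mp hj))
  have hsign : (-1 : ℝ) ^ k = (-1) ^ (k - j) * (-1) ^ j := by rw [← pow_add, hjk]
  rw [cos_add_pi, sin_add_pi, neg_pow, neg_pow (sin α), hsign]
  ring

theorem antiperiodic_trigForm_pi {k : ℕ} (hk : Odd k) : Antiperiodic (trigForm k c) π := by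
  intro α
  rw [trigForm_add_pi, hk.neg_one_pow, neg_one_mul]

end trigForm

theorem Function.Antiperiodic.of_odd_mul {α β : Type*} [CommRing α] [InvolutiveNeg β]
    {f : α → β} {c : α} {n : ℕ} (ha : Antiperiodic f (n * c)) (hn : Odd n)
    (hp : Periodic f (2 * c)) : Antiperiodic f c := by
  obtain ⟨t, rfl⟩ := hn
  push_cast at ha
  rw [show c = -(t * (2 * c) - (2 * t + 1) * c) by ring]
  exact ((hp.nat_mul t).sub_antiperiod ha).neg

theorem Function.Antiperiodic.exists_eq_zero_mem_Ioo {f : ℝ → ℝ} {c x : ℝ}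
    (hf : Antiperiodic f c) (hcont : Continuous f) (hc : 0 < c) (hx : f x ≠ 0) :
    ∃ θ ∈ Set.Ioo x (x + c), f θ = 0 := by
  have hxc : x ≤ x + c := by linarith
  rcases hx.lt_or_gt with hneg | hpos
  · exact intermediate_value_Ioo hxc hcont.continuousOn ⟨hneg, by rw [hf]; linarith⟩
  · exact intermediate_value_Ioo' hxc hcont.continuousOn ⟨by rw [hf]; linarith, hpos⟩

theorem trig_poly_sign_alternation_and_zeros_general (k : ℕ) (hk : Odd k) (c : ℕ → ℝ)
    (hc0 : c 0 > 0)
    (g : ℝ → ℝ)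
    (hg : ∀ α : ℝ, g α = ∑ j ∈ Finset.range (k + 1),
      c j * Real.cos α ^ (k - j) * Real.sin α ^ j)
    (hper : ∀ α : ℝ, g (α + 2 * π / k) = g α) :
    (∀ j : ℕ, j ≤ (k - 1) / 2 →
        g (2 * π * (j : ℝ) / k) = g 0 ∧ g (π / k + 2 * π * (j : ℝ) / k) = - g 0) ∧
    g 0 > 0 ∧
    (∀ j : ℕ, 1 ≤ j → j ≤ k →
      ∃ θ : ℝ, ((j : ℝ) - 1) * π / k < θ ∧ θ < (j : ℝ) * π / k ∧ g θ = 0) := by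
  obtain rfl : g = trigForm k c := funext hg
  have hk0 : (k : ℝ) ≠ 0 := by exact_mod_cast hk.pos.ne'
  have hperiod : Periodic (trigForm k c) (2 * (π / k)) := fun α => by
    simpa only [mul_div_assoc] using hper α
  have hanti : Antiperiodic (trigForm k c) (π / k) := by
    refine Antiperiodic.of_odd_mul ?_ hk hperiod
    rw [mul_div_cancel₀ _ hk0]
    exact antiperiodic_trigForm_pi c hk
  have hval (n : ℕ) : trigForm k c (n * (π / k)) = (-1) ^ n * c 0 := by
    simpa [trigForm_zero] using hanti.add_nsmul_eq (x := 0) n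
  refine ⟨fun j _ => ⟨?_, ?_⟩, by rwa [trigForm_zero], fun j hj1 _ => ?_⟩
  · rw [show 2 * π * (j : ℝ) / k = j * (2 * (π / k)) by ring]
    exact hperiod.nat_mul_eq j
  · rw [show π / k + 2 * π * (j : ℝ) / k = j * (2 * (π / k)) + π / k by ring]
    exact (hperiod.nat_mul j).add_antiperiod_eq hanti
  · have hstart : trigForm k c ((j - 1 : ℕ) * (π / k)) ≠ 0 := by
      rw [hval]
      exact mul_ne_zero (pow_ne_zero _ (by norm_num)) hc0.ne'
    obtain ⟨θ, ⟨hlo, hhi⟩, hθ⟩ :=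
      hanti.exists_eq_zero_mem_Ioo (continuous_trigForm k c) (by positivity) hstart
    rw [Nat.cast_sub hj1, Nat.cast_one] at hlo hhi
    refine ⟨θ, ?_, ?_, hθ⟩
    · rwa [mul_div_assoc]
    · exact hhi.trans_eq (by ring)

theorem trig_poly_sign_alternation_and_zeros (k : ℕ) (hk : Odd k) (c : ℕ → ℝ)
    (hc0 : c 0 > 0)
    (g : ℝ → ℝ)
    (hg : ∀ α : ℝ, g α = ∑ j ∈ Finset.range (k + 1),
      c j * Real.cos α ^ (k - j) * Real.sin α ^ j)
    (hper : ∀ α : ℝ, g (α + 2 * π / k) = g α)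
    (hsym : ∀ α : ℝ, g (2 * π - α) = g α) :
    (∀ j : ℕ, j ≤ (k - 1) / 2 →
        g (2 * π * (j : ℝ) / k) = g 0 ∧ g (π / k + 2 * π * (j : ℝ) / k) = - g 0) ∧
    g 0 > 0 ∧
    (∀ j : ℕ, 1 ≤ j → j ≤ k →
      ∃ θ : ℝ, ((j : ℝ) - 1) * π / k < θ ∧ θ < (j : ℝ) * π / k ∧ g θ = 0) :=
  trig_poly_sign_alternation_and_zeros_general k hk c hc0 g hg hper
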